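/- arXiv:2103.00083 — 2 statements merged into one kernel-verified Lean document; each statement's English description precedes it below -/
import Mathlib

section
/- Let m ≥ 1, let 0 ≤ τ₁ ≤ τ₂ ≤ ⋯ ≤ τ_m ≤ 1 be quantile levels, let v ∈ ℝ^m, and let y ∈ ℝ. Then sorting can only improve the total pinball loss: ∑_{i=1}^m ψ_{τ_i}(y − sort(v)_i) ≤ ∑_{i=1}^m ψ_{τ_i}(y − v_i). -/
/-!
Write `ψ_τ(z) = τ z + max (-z) 0`. The second part of the total loss only sees the multiset of
the entries of `v`, so it is unchanged by sorting, and the first part is `∑ τᵢ y - ∑ τᵢ vᵢ`.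
By the rearrangement inequality, pairing the nondecreasing `τ` with the sorted entries of `v`
maximizes `∑ τᵢ vᵢ`.
-/

/-- The pinball (tilted-ℓ₁) loss at quantile level `τ`. -/
noncomputable def pinball (τ z : ℝ) : ℝ := if 0 ≤ z then τ * z else (1 - τ) * (-z)

open Finset

lemma pinball_eq_mul_add_max_neg (τ z : ℝ) : pinball τ z = τ * z + max (-z) 0 := by
  unfold pinball
  split_ifs with h
  · rw [max_eq_right (by linarith)]; ring
  · rw [max_eq_left (by linarith)]; ring

lemma Monotone.sum_mul_le_sum_mul_sort {α : Type*} [CommRing α] [LinearOrder α]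
    [IsStrictOrderedRing α] {m : ℕ} {τ : Fin m → α} (hτ : Monotone τ) (v : Fin m → α) :
    ∑ i, τ i * v i ≤ ∑ i, τ i * v (Tuple.sort v i) := by
  have hmv : Monovary τ (v ∘ Tuple.sort v) := hτ.monovary (Tuple.monotone_sort v)
  simpa [Function.comp] using hmv.sum_smul_comp_perm_le_sum_smul (σ := (Tuple.sort v)⁻¹)

theorem pinball_sort_le_general (m : ℕ) (τ : Fin m → ℝ) (hτmono : Monotone τ)
    (v : Fin m → ℝ) (y : ℝ) :
    ∑ i, pinball (τ i) (y - (v ∘ Tuple.sort v) i) ≤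
      ∑ i, pinball (τ i) (y - v i) := by
  simp only [Function.comp, pinball_eq_mul_add_max_neg, sum_add_distrib, mul_sub,
    sum_sub_distrib]
  have hmax : ∑ i, max (-(y - v (Tuple.sort v i))) 0 = ∑ i, max (-(y - v i)) 0 :=
    Equiv.sum_comp (Tuple.sort v) fun i => max (-(y - v i)) 0
  linarith [hτmono.sum_mul_le_sum_mul_sort v]

/-- Sorting the vector of quantile predictions can only improve the total pinball loss. -/
theorem pinball_sort_le (m : ℕ) (hm : 1 ≤ m) (τ : Fin m → ℝ) (hτmono : Monotone τ)
    (hτ0 : ∀ i, 0 ≤ τ i) (hτ1 : ∀ i, τ i ≤ 1) (v : Fin m → ℝ) (y : ℝ) :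
    ∑ i, pinball (τ i) (y - (v ∘ Tuple.sort v) i) ≤
      ∑ i, pinball (τ i) (y - v i) :=
  pinball_sort_le_general m τ hτmono v y
end

section
/- Let m ≥ 1, let v ∈ ℝ^m, and let u ∈ K_m be the isotonic projection of v, i.e., u minimizes the Euclidean norm ‖v − u‖₂ over all u ∈ K_m. Then for every nondecreasing vector g ∈ K_m and every p ≥ 1, the ℓ_p error can only improve: (∑_{i=1}^m |u_i − g_i|^p)^{1/p} ≤ (∑_{i=1}^m |v_i − g_i|^p)^{1/p}. -/
/-!
The projection `u` satisfies the variational inequality `⟪v - u, w - u⟫ ≤ 0` for every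
monotone `w`. For a convex `φ` with right derivative `φ'`, put `t i = φ' (u i - g i)`. Since `g`
is monotone, `t` is antitone on every block where `u` is constant, so `u - ε t` is still monotone
for small `ε > 0`, and the variational inequality gives `⟪v - u, t⟫ ≥ 0`. Summing the subgradient
inequalities `φ (u i - g i) + t i * (v i - u i) ≤ φ (v i - g i)` then gives
`∑ φ (u - g) ≤ ∑ φ (v - g)`; the theorem is the case `φ = |·| ^ p`.
-/

open Set Filter Topology

namespace ConvexOn

variable {f : ℝ → ℝ}

theorem monotone_rightDeriv (hf : ConvexOn ℝ univ f) :
    Monotone fun x ↦ derivWithin f (Ioi x) x := by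
  simpa using hf.monotoneOn_rightDeriv

theorem add_rightDeriv_mul_sub_le (hf : ConvexOn ℝ univ f) (x y : ℝ) :
    f x + derivWithin f (Ioi x) x * (y - x) ≤ f y := by
  have hx : x ∈ interior univ := by simp
  rcases lt_trichotomy x y with hxy | rfl | hyx
  · have h := hf.rightDeriv_le_slope_of_mem_interior hx (mem_univ y) hxy
    rw [slope_def_field, le_div_iff₀ (sub_pos.2 hxy)] at h
    linarith
  · simp
  · have h := (hf.slope_le_leftDeriv_of_mem_interior (mem_univ y) hx hyx).trans
      (hf.leftDeriv_le_rightDeriv_of_mem_interior hx)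
    rw [slope_def_field, div_le_iff₀ (sub_pos.2 hyx)] at h
    linarith

end ConvexOn

theorem convexOn_abs_rpow {p : ℝ} (hp : 1 ≤ p) : ConvexOn ℝ univ fun x : ℝ ↦ |x| ^ p := by
  refine ⟨convex_univ, fun x _ y _ a b ha hb hab ↦ ?_⟩
  calc |a • x + b • y| ^ p ≤ (a • |x| + b • |y|) ^ p := by
        gcongr
        simpa [abs_mul, abs_of_nonneg ha, abs_of_nonneg hb] using abs_add_le (a * x) (b * y)
    _ ≤ a • |x| ^ p + b • |y| ^ p :=
        (convexOn_rpow hp).2 (abs_nonneg x) (abs_nonneg y) ha hb hab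

theorem tendsto_mul_const_nhdsGT_zero (c : ℝ) :
    Tendsto (fun s : ℝ ↦ s * c) (𝓝[>] 0) (𝓝 0) := by
  simpa using ((tendsto_id (x := 𝓝 (0 : ℝ))).mul_const c).mono_left nhdsWithin_le_nhds

section Isotonic

variable {ι : Type*}

theorem convex_setOf_monotone [Preorder ι] : Convex ℝ {w : ι → ℝ | Monotone w} := by
  intro x hx y hy a b ha hb _ i j hij
  simp only [Pi.add_apply, Pi.smul_apply, smul_eq_mul]
  gcongr
  exacts [hx hij, hy hij]

theorem Monotone.eventually_monotone_sub_smul [Preorder ι] [Finite ι] {u t : ι → ℝ}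
    (hu : Monotone u) (ht : ∀ ⦃i j⦄, i ≤ j → u i = u j → t j ≤ t i) :
    ∀ᶠ ε in 𝓝[>] (0 : ℝ), Monotone (u - ε • t) := by
  simp only [Monotone, eventually_all]
  intro i j
  by_cases hij : i ≤ j
  · simp only [hij, Pi.sub_apply, Pi.smul_apply, smul_eq_mul, forall_const]
    rcases (hu hij).eq_or_lt with heq | hlt
    · filter_upwards [self_mem_nhdsWithin] with ε (hε : 0 < ε)
      have := mul_le_mul_of_nonneg_left (ht hij heq) hε.le
      linarith
    · filter_upwards [(tendsto_mul_const_nhdsGT_zero (t j - t i)).eventually_lt_const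
        (sub_pos.2 hlt)] with ε hε
      linarith
  · simp [hij]

theorem sum_sub_mul_sub_nonpos_of_isMinOn [Fintype ι] {K : Set (ι → ℝ)} (hK : Convex ℝ K)
    {u v w : ι → ℝ} (hu : u ∈ K) (hmin : IsMinOn (fun w ↦ ∑ i, (v i - w i) ^ 2) K u)
    (hw : w ∈ K) :
    ∑ i, (v i - u i) * (w i - u i) ≤ 0 := by
  set C := ∑ i, (v i - u i) * (w i - u i)
  set D := ∑ i, (w i - u i) ^ 2
  have hsegment : ∀ s ∈ Ioc (0 : ℝ) 1, 2 * C ≤ s * D := by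
    rintro s ⟨hs0, hs1⟩
    have h := isMinOn_iff.1 hmin _ (hK.add_smul_sub_mem hu hw ⟨hs0.le, hs1⟩)
    have hexpand : ∑ i, (v i - (u + s • (w - u)) i) ^ 2
        = ∑ i, (v i - u i) ^ 2 - s * (2 * C - s * D) := by
      simp only [C, D, Finset.mul_sum, ← Finset.sum_sub_distrib]
      refine Finset.sum_congr rfl fun i _ ↦ ?_
      simp only [Pi.add_apply, Pi.smul_apply, Pi.sub_apply, smul_eq_mul]
      ring
    rw [hexpand] at h
    nlinarith
  have := ge_of_tendsto (tendsto_mul_const_nhdsGT_zero D) (by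
    filter_upwards [Ioc_mem_nhdsGT zero_lt_one] with s hs using hsegment s hs)
  linarith

theorem ConvexOn.sum_comp_sub_le_of_isotonic [Fintype ι] [Preorder ι] {φ : ℝ → ℝ}
    (hφ : ConvexOn ℝ univ φ) {u v g : ι → ℝ} (hu : Monotone u) (hg : Monotone g)
    (hvi : ∀ w : ι → ℝ, Monotone w → ∑ i, (v i - u i) * (w i - u i) ≤ 0) :
    ∑ i, φ (u i - g i) ≤ ∑ i, φ (v i - g i) := by
  set t : ι → ℝ := fun i ↦ derivWithin φ (Ioi (u i - g i)) (u i - g i)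
  have ht : ∀ ⦃i j⦄, i ≤ j → u i = u j → t j ≤ t i := fun i j hij huij ↦
    hφ.monotone_rightDeriv (by linarith [hg hij])
  obtain ⟨ε, hε_mono, hε_pos⟩ :=
    ((hu.eventually_monotone_sub_smul ht).and self_mem_nhdsWithin).exists
  have hinner : 0 ≤ ∑ i, t i * (v i - u i) := by
    have h := hvi _ hε_mono
    simp only [Pi.sub_apply, Pi.smul_apply, smul_eq_mul, sub_sub_cancel_left] at h
    have : ∑ i, (v i - u i) * -(ε * t i) = -ε * ∑ i, t i * (v i - u i) := by
      rw [Finset.mul_sum]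
      exact Finset.sum_congr rfl fun i _ ↦ by ring
    nlinarith
  calc ∑ i, φ (u i - g i) ≤ ∑ i, (φ (u i - g i) + t i * (v i - u i)) := by
        rw [Finset.sum_add_distrib]
        linarith
    _ ≤ ∑ i, φ (v i - g i) := Finset.sum_le_sum fun i _ ↦ by
        simpa using hφ.add_rightDeriv_mul_sub_le (u i - g i) (v i - g i)

end Isotonic

theorem lp_isotonicProj_le_general (m : ℕ) (v u : Fin m → ℝ)
    (hu : Monotone u)
    (hproj : ∀ w : Fin m → ℝ, Monotone w →
      Real.sqrt (∑ i, (v i - u i) ^ 2) ≤ Real.sqrt (∑ i, (v i - w i) ^ 2))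
    (g : Fin m → ℝ) (hg : Monotone g) (p : ℝ) (hp : 1 ≤ p) :
    (∑ i, |u i - g i| ^ p) ^ (1 / p) ≤ (∑ i, |v i - g i| ^ p) ^ (1 / p) := by
  have hmin : IsMinOn (fun w ↦ ∑ i, (v i - w i) ^ 2) {w | Monotone w} u :=
    isMinOn_iff.2 fun w hw ↦ (Real.sqrt_le_sqrt_iff (by positivity)).1 (hproj w hw)
  have hsum := (convexOn_abs_rpow hp).sum_comp_sub_le_of_isotonic hu hg fun w hw ↦
    sum_sub_mul_sub_nonpos_of_isMinOn convex_setOf_monotone hu hmin hw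
  exact Real.rpow_le_rpow (by positivity) hsum (by positivity)

/-- Isotonic projection (the Euclidean-norm projection onto the cone of nondecreasing
vectors) can only improve the ℓ_p error to any nondecreasing target vector, for `p ≥ 1`. -/
theorem lp_isotonicProj_le (m : ℕ) (hm : 1 ≤ m) (v u : Fin m → ℝ)
    (hu : Monotone u)
    (hproj : ∀ w : Fin m → ℝ, Monotone w →
      Real.sqrt (∑ i, (v i - u i) ^ 2) ≤ Real.sqrt (∑ i, (v i - w i) ^ 2))
    (g : Fin m → ℝ) (hg : Monotone g) (p : ℝ) (hp : 1 ≤ p) :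
    (∑ i, |u i - g i| ^ p) ^ (1 / p) ≤ (∑ i, |v i - g i| ^ p) ^ (1 / p) :=
  lp_isotonicProj_le_general m v u hu hproj g hg p hp
end
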